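/- arXiv:1806.06747 — 4 statements merged into one kernel-verified Lean document; each statement's English description precedes it below -/
import Mathlib

section
/- Let (X, d) be a complete metric space and let (x_α) be a net in X that is almost geodesic and bounded. Then (x_α) converges to some point x ∈ X. -/
/-!
Along an almost geodesic net the distance to the base point is almost nondecreasing, and it is
bounded. Past an index `β` where it is within `ε` of its supremum over a tail, the almost geodesic
inequality `d(x_β, x_α) ≤ d(b, x_α) - d(b, x_β) + ε` forces `d(x_β, x_α) < 2ε` for all `α ≥ β`.
So the net is Cauchy, and it converges by completeness.
-/

open Filter Topology Set

def IsAlmostGeodesic {X ι : Type*} [PseudoMetricSpace X] [Preorder ι] (b : X) (x : ι → X) :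
    Prop :=
  ∀ ε > 0, ∃ A : ι, ∀ α α', A ≤ α → α ≤ α' →
    dist b (x α') ≥ dist b (x α) + dist (x α) (x α') - ε

lemma BddAbove.exists_ge_forall_ge_lt_add {ι : Type*} [Preorder ι] {f : ι → ℝ}
    (hf : BddAbove (range f)) (A : ι) {ε : ℝ} (hε : 0 < ε) :
    ∃ β, A ≤ β ∧ ∀ α, A ≤ α → f α < f β + ε := by
  have hne : (f '' Ici A).Nonempty := (nonempty_Ici).image f
  have hbdd : BddAbove (f '' Ici A) := hf.mono (image_subset_range f _)
  obtain ⟨_, ⟨β, hβ, rfl⟩, hlt⟩ := exists_lt_of_lt_csSup hne (sub_lt_self _ hε)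
  refine ⟨β, hβ, fun α hα => ?_⟩
  have := le_csSup hbdd (mem_image_of_mem f (mem_Ici.2 hα))
  linarith

lemma IsAlmostGeodesic.cauchySeq {X ι : Type*} [PseudoMetricSpace X] [Nonempty ι]
    [SemilatticeSup ι] {b : X} {x : ι → X} (hx : IsAlmostGeodesic b x)
    (hbdd : BddAbove (range fun α => dist b (x α))) : CauchySeq x := by
  refine Metric.cauchySeq_iff'.2 fun ε hε => ?_
  obtain ⟨A, hA⟩ := hx (ε / 2) (half_pos hε)
  obtain ⟨β, hAβ, hβ⟩ := hbdd.exists_ge_forall_ge_lt_add A (half_pos hε)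
  refine ⟨β, fun α hβα => ?_⟩
  have hgeod := hA β α hAβ hβα
  have hsup := hβ α (hAβ.trans hβα)
  rw [dist_comm]
  linarith

theorem stmt_3 {X : Type*} [MetricSpace X] [CompleteSpace X] (b : X)
    {ι : Type*} [Nonempty ι] [SemilatticeSup ι] (x : ι → X)
    (halmost : ∀ ε > 0, ∃ A : ι, ∀ α α', A ≤ α → α ≤ α' →
      dist b (x α') ≥ dist b (x α) + dist (x α) (x α') - ε)
    (hbdd : ∃ M : ℝ, ∀ α, dist (x α) b ≤ M) :
    ∃ x₀ : X, Tendsto x atTop (𝓝 x₀) := by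
  obtain ⟨M, hM⟩ := hbdd
  have hdist_bdd : BddAbove (range fun α => dist b (x α)) :=
    ⟨M, forall_mem_range.2 fun α => dist_comm b (x α) ▸ hM α⟩
  exact cauchySeq_tendsto_of_complete (IsAlmostGeodesic.cauchySeq halmost hdist_bdd)
end

section
/- Let H be a real Hilbert space and V = ℝ ⊕ H, with the open cone V₊ = {(λ, x) ∈ V : ‖x‖ < λ} and the partial order u ≤ v iff v − u lies in the closure of V₊. For (μ, x), (γ, y) ∈ V₊, the gauge M((μ,x)/(γ,y)) = inf{β > 0 : (μ,x) ≤ β(γ,y)} equals (γμ − ⟨x,y⟩ + √((γμ − ⟨x,y⟩)² − (μ² − ‖x‖²)(γ² − ‖y‖²))) / (γ² − ‖y‖²). -/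
/-!
Write `u = (μ, x)`, `v = (γ, y)` and let `B((t, z), (t', z')) = t t' - ⟪z, z'⟫` be the Minkowski form
on `ℝ × H`, so that the closed cone is `{w | 0 ≤ B(w, w) ∧ 0 ≤ w.1}`. The quadratic
`q(β) = B(βv - u, βv - u) = aβ² - 2bβ + c`, with `a = B(v, v) > 0`, `b = B(u, v)`, `c = B(u, u)`,
satisfies `a q(β) = (aβ - b)² - (b² - ac)`, while `aβ - b = B(v, βv - u)`. For a vector `w` with
`0 ≤ B(w, w)`, the sign of `B(v, w)` is the sign of the time component of `w`, since `v` lies in the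
open cone. Hence `u ≤ βv` exactly when `aβ - b ≥ √(b² - ac)`, and the set of admissible `β` is the
half-line starting at the larger root of `q`.
-/

open RealInnerProductSpace

section

variable {H : Type*} [NormedAddCommGroup H] [InnerProductSpace ℝ H]

lemma minkowski_inner_nonneg_iff {γ t : ℝ} {y z : H} (hy : ‖y‖ < γ) (hz : ‖z‖ ≤ |t|) :
    0 ≤ γ * t - ⟪y, z⟫ ↔ 0 ≤ t := by
  have hyz : |⟪y, z⟫| ≤ ‖y‖ * |t| :=
    (abs_real_inner_le_norm y z).trans (mul_le_mul_of_nonneg_left hz (norm_nonneg y))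
  rcases le_or_gt 0 t with ht | ht
  · rw [abs_of_nonneg ht] at hyz
    simp only [ht, iff_true]
    nlinarith [le_abs_self ⟪y, z⟫]
  · rw [abs_of_neg ht] at hyz
    simp only [not_le.mpr ht, iff_false, not_le]
    nlinarith [neg_abs_le ⟪y, z⟫]

lemma norm_smul_sub_le_iff {μ γ β : ℝ} {x y : H} (hy : ‖y‖ < γ) :
    ‖β • y - x‖ ≤ β * γ - μ ↔
      γ * μ - ⟪x, y⟫ +
          √((γ * μ - ⟪x, y⟫) ^ 2 - (μ ^ 2 - ‖x‖ ^ 2) * (γ ^ 2 - ‖y‖ ^ 2)) ≤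
        β * (γ ^ 2 - ‖y‖ ^ 2) := by
  set a := γ ^ 2 - ‖y‖ ^ 2
  set b := γ * μ - ⟪x, y⟫
  set D := b ^ 2 - (μ ^ 2 - ‖x‖ ^ 2) * a
  set t := β * γ - μ
  set z := β • y - x
  have ha : 0 < a := by nlinarith [norm_nonneg y]
  have hlin : β * a - b = γ * t - ⟪y, z⟫ := by
    rw [inner_sub_right, real_inner_smul_right, real_inner_self_eq_norm_sq, real_inner_comm]
    ring
  have hz : ‖z‖ ^ 2 = β ^ 2 * ‖y‖ ^ 2 - 2 * β * ⟪x, y⟫ + ‖x‖ ^ 2 := by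
    rw [norm_sub_sq_real, norm_smul, real_inner_smul_left, real_inner_comm, mul_pow,
      Real.norm_eq_abs, sq_abs]
    ring
  have hquad : a * (t ^ 2 - ‖z‖ ^ 2) = (β * a - b) ^ 2 - D := by
    rw [hz]
    ring
  have hsq : ‖z‖ ^ 2 ≤ t ^ 2 ↔ D ≤ (β * a - b) ^ 2 := by
    rw [← sub_nonneg, ← mul_nonneg_iff_of_pos_left ha, hquad, sub_nonneg]
  calc ‖z‖ ≤ t ↔ 0 ≤ t ∧ ‖z‖ ^ 2 ≤ t ^ 2 := by
        rw [← Real.sqrt_le_iff, Real.sqrt_sq (norm_nonneg z)]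
    _ ↔ 0 ≤ β * a - b ∧ D ≤ (β * a - b) ^ 2 := by
        rw [← hsq]
        refine and_congr_left fun h ↦ ?_
        have habs : ‖z‖ ≤ |t| := by simpa using sq_le_sq.mp h
        rw [hlin, minkowski_inner_nonneg_iff hy habs]
    _ ↔ √D ≤ β * a - b := Real.sqrt_le_iff.symm
    _ ↔ b + √D ≤ β * a := le_sub_iff_add_le'

end

theorem stmt_4_general {H : Type*} [NormedAddCommGroup H] [InnerProductSpace ℝ H]
    (μ γ : ℝ) (x y : H) (hx : ‖x‖ < μ) (hy : ‖y‖ < γ) :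
    sInf {β : ℝ | 0 < β ∧ ‖β • y - x‖ ≤ β * γ - μ} =
      (γ * μ - ⟪x, y⟫ +
        Real.sqrt ((γ * μ - ⟪x, y⟫) ^ 2 - (μ ^ 2 - ‖x‖ ^ 2) * (γ ^ 2 - ‖y‖ ^ 2))) /
        (γ ^ 2 - ‖y‖ ^ 2) := by
  have ha : 0 < γ ^ 2 - ‖y‖ ^ 2 := by nlinarith [norm_nonneg y]
  have hb : 0 < γ * μ - ⟪x, y⟫ := by
    nlinarith [real_inner_le_norm x y, norm_nonneg x, norm_nonneg y]
  suffices hset : {β : ℝ | 0 < β ∧ ‖β • y - x‖ ≤ β * γ - μ} =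
      Set.Ici ((γ * μ - ⟪x, y⟫ +
        √((γ * μ - ⟪x, y⟫) ^ 2 - (μ ^ 2 - ‖x‖ ^ 2) * (γ ^ 2 - ‖y‖ ^ 2))) / (γ ^ 2 - ‖y‖ ^ 2)) by
    rw [hset, csInf_Ici]
  ext β
  rw [Set.mem_ofPred_eq, Set.mem_Ici, div_le_iff₀ ha, norm_smul_sub_le_iff hy,
    and_iff_right_of_imp]
  intro hβ
  exact pos_of_mul_pos_left ((add_pos_of_pos_of_nonneg hb (Real.sqrt_nonneg _)).trans_le hβ) ha.le

theorem stmt_4 {H : Type*} [NormedAddCommGroup H] [InnerProductSpace ℝ H] [CompleteSpace H]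
    (μ γ : ℝ) (x y : H) (hx : ‖x‖ < μ) (hy : ‖y‖ < γ) :
    sInf {β : ℝ | 0 < β ∧ ‖β • y - x‖ ≤ β * γ - μ} =
      (γ * μ - ⟪x, y⟫ +
        Real.sqrt ((γ * μ - ⟪x, y⟫) ^ 2 - (μ ^ 2 - ‖x‖ ^ 2) * (γ ^ 2 - ‖y‖ ^ 2))) /
        (γ ^ 2 - ‖y‖ ^ 2) :=
  stmt_4_general μ γ x y hx hy
end

section
/- Let H be a real Hilbert space, let (x_α) be a net in the open unit ball of H converging weakly to x̂ with ‖x_α‖ → r, where ‖x̂‖ ≤ r ≤ 1, and let y ∈ H with ‖y‖ < 1. Then i((1,x_α))((1,y)) := d_h((1,x_α),(1,y)) − d_h((1,x_α),(1,0)) converges to log((1 − ⟨x̂,y⟩ + √((1 − ⟨x̂,y⟩)² − (1 − ‖y‖²)(1 − r²))) / ((1 + r)√(1 − ‖y‖²))). -/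
/-!
Subtracting `dh x 0 = log ((1 + ‖x‖) / √(1 - ‖x‖²))` cancels the factor `√(1 - ‖x‖²)`, which
degenerates as `‖x‖ → 1`, and leaves the logarithm of an expression that depends on `x` only
through `⟪x, y⟫` and `‖x‖`, continuously. Along the net these converge to `⟪x̂, y⟫` and `r`;
the limit of the argument is positive because `⟪x̂, y⟫ ≤ ‖x̂‖ ‖y‖ < 1`.
-/

open Filter Topology RealInnerProductSpace

noncomputable def dh {H : Type*} [NormedAddCommGroup H] [InnerProductSpace ℝ H]
    (x y : H) : ℝ :=
  Real.log ((1 - ⟪x, y⟫ + Real.sqrt ((1 - ⟪x, y⟫) ^ 2 - (1 - ‖x‖ ^ 2) * (1 - ‖y‖ ^ 2))) /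
    (Real.sqrt (1 - ‖x‖ ^ 2) * Real.sqrt (1 - ‖y‖ ^ 2)))

/-- Evaluated at `a = ⟪x, y⟫`, `b = ‖x‖`, `s = ‖y‖`, its logarithm is `dh x y - dh x 0`. -/
noncomputable def horoArg (a b s : ℝ) : ℝ :=
  (1 - a + Real.sqrt ((1 - a) ^ 2 - (1 - s ^ 2) * (1 - b ^ 2))) /
    ((1 + b) * Real.sqrt (1 - s ^ 2))

lemma horoArg_pos {a b s : ℝ} (ha : a < 1) (hb : -1 < b) (hs : s ^ 2 < 1) :
    0 < horoArg a b s :=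
  div_pos (add_pos_of_pos_of_nonneg (sub_pos.2 ha) (Real.sqrt_nonneg _))
    (mul_pos (by linarith) (Real.sqrt_pos.2 (sub_pos.2 hs)))

lemma tendsto_log_horoArg {α : Type*} {l : Filter α} {a b : α → ℝ} {a₀ b₀ : ℝ} (s : ℝ)
    (ha : Tendsto a l (𝓝 a₀)) (hb : Tendsto b l (𝓝 b₀))
    (ha₀ : a₀ < 1) (hb₀ : -1 < b₀) (hs : s ^ 2 < 1) :
    Tendsto (fun i => Real.log (horoArg (a i) (b i) s)) l
      (𝓝 (Real.log (horoArg a₀ b₀ s))) := by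
  have hsub : Tendsto (fun i => 1 - a i) l (𝓝 (1 - a₀)) := tendsto_const_nhds.sub ha
  have hnum : Tendsto (fun i => 1 - a i + Real.sqrt ((1 - a i) ^ 2 - (1 - s ^ 2) * (1 - b i ^ 2)))
      l (𝓝 (1 - a₀ + Real.sqrt ((1 - a₀) ^ 2 - (1 - s ^ 2) * (1 - b₀ ^ 2)))) :=
    hsub.add ((hsub.pow 2).sub (tendsto_const_nhds.mul (tendsto_const_nhds.sub (hb.pow 2)))).sqrt
  have hden : Tendsto (fun i => (1 + b i) * Real.sqrt (1 - s ^ 2)) l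
      (𝓝 ((1 + b₀) * Real.sqrt (1 - s ^ 2))) :=
    (tendsto_const_nhds.add hb).mul tendsto_const_nhds
  have hden₀ : (1 + b₀) * Real.sqrt (1 - s ^ 2) ≠ 0 :=
    mul_ne_zero (by linarith) (Real.sqrt_pos.2 (sub_pos.2 hs)).ne'
  exact (hnum.div hden hden₀).log (horoArg_pos ha₀ hb₀ hs).ne'

section InnerProductSpace

variable {H : Type*} [NormedAddCommGroup H] [InnerProductSpace ℝ H]

lemma inner_lt_one_of_norm_le_one {x y : H} (hx : ‖x‖ ≤ 1) (hy : ‖y‖ < 1) : ⟪x, y⟫ < 1 :=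
  calc ⟪x, y⟫ ≤ ‖x‖ * ‖y‖ := real_inner_le_norm x y
    _ ≤ ‖y‖ := mul_le_of_le_one_left (norm_nonneg y) hx
    _ < 1 := hy

lemma dh_zero_right (x : H) :
    dh x 0 = Real.log ((1 + ‖x‖) / Real.sqrt (1 - ‖x‖ ^ 2)) := by
  simp [dh, Real.sqrt_sq (norm_nonneg x)]

lemma dh_sub_dh_zero {x y : H} (hx : ‖x‖ < 1) (hy : ‖y‖ < 1) :
    dh x y - dh x 0 = Real.log (horoArg ⟪x, y⟫ ‖x‖ ‖y‖) := by
  have hnum : 0 < 1 - ⟪x, y⟫ + Real.sqrt ((1 - ⟪x, y⟫) ^ 2 - (1 - ‖x‖ ^ 2) * (1 - ‖y‖ ^ 2)) :=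
    add_pos_of_pos_of_nonneg (sub_pos.2 (inner_lt_one_of_norm_le_one hx.le hy))
      (Real.sqrt_nonneg _)
  have hsx : 0 < Real.sqrt (1 - ‖x‖ ^ 2) := Real.sqrt_pos.2 (by nlinarith [norm_nonneg x])
  have hsy : 0 < Real.sqrt (1 - ‖y‖ ^ 2) := Real.sqrt_pos.2 (by nlinarith [norm_nonneg y])
  have hbx : 0 < 1 + ‖x‖ := by positivity
  rw [dh_zero_right, dh, ← Real.log_div (by positivity) (by positivity), horoArg,
    mul_comm (1 - ‖y‖ ^ 2)]
  congr 1
  field_simp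

end InnerProductSpace

theorem stmt_11_general {H : Type*} [NormedAddCommGroup H] [InnerProductSpace ℝ H]
    {ι : Type*} [SemilatticeSup ι]
    (x : ι → H) (hx : ∀ α, ‖x α‖ < 1) (xhat : H) (r : ℝ)
    (hr : ‖xhat‖ ≤ r) (hr1 : r ≤ 1)
    (hweak : ∀ z : H, Tendsto (fun α => ⟪z, x α⟫) atTop (𝓝 ⟪z, xhat⟫))
    (hnorm : Tendsto (fun α => ‖x α‖) atTop (𝓝 r))
    (y : H) (hy : ‖y‖ < 1) :
    Tendsto (fun α => dh (x α) y - dh (x α) (0 : H)) atTop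
      (𝓝 (Real.log ((1 - ⟪xhat, y⟫ +
        Real.sqrt ((1 - ⟪xhat, y⟫) ^ 2 - (1 - ‖y‖ ^ 2) * (1 - r ^ 2))) /
        ((1 + r) * Real.sqrt (1 - ‖y‖ ^ 2))))) := by
  have hinner : Tendsto (fun α => ⟪x α, y⟫) atTop (𝓝 ⟪xhat, y⟫) := by
    simpa only [real_inner_comm y] using hweak y
  simp only [dh_sub_dh_zero (hx _) hy]
  exact tendsto_log_horoArg ‖y‖ hinner hnorm
    (inner_lt_one_of_norm_le_one (hr.trans hr1) hy)
    (by linarith [(norm_nonneg xhat).trans hr]) (by nlinarith [norm_nonneg y])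

theorem stmt_11 {H : Type*} [NormedAddCommGroup H] [InnerProductSpace ℝ H] [CompleteSpace H]
    {ι : Type*} [Nonempty ι] [SemilatticeSup ι]
    (x : ι → H) (hx : ∀ α, ‖x α‖ < 1) (xhat : H) (r : ℝ)
    (hr : ‖xhat‖ ≤ r) (hr1 : r ≤ 1)
    (hweak : ∀ z : H, Tendsto (fun α => ⟪z, x α⟫) atTop (𝓝 ⟪z, xhat⟫))
    (hnorm : Tendsto (fun α => ‖x α‖) atTop (𝓝 r))
    (y : H) (hy : ‖y‖ < 1) :
    Tendsto (fun α => dh (x α) y - dh (x α) (0 : H)) atTop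
      (𝓝 (Real.log ((1 - ⟪xhat, y⟫ +
        Real.sqrt ((1 - ⟪xhat, y⟫) ^ 2 - (1 - ‖y‖ ^ 2) * (1 - r ^ 2))) /
        ((1 + r) * Real.sqrt (1 - ‖y‖ ^ 2))))) :=
  stmt_11_general x hx xhat r hr hr1 hweak hnorm y hy
end

section
/- Let H be a real Hilbert space. No almost geodesic net ((1, x_α)) in the Klein model (with base point (1,0)) can have i((1,x_α)) converging pointwise to a horofunction ξ with parameter ‖x̂‖ < 1, r = 1; that is, if (x_α) is a net in the open unit ball with ‖x_α‖ → 1 converging weakly to x̂ with ‖x̂‖ < 1, then (x_α) is not almost geodesic with respect to d_h and base point (1,0). -/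
open Filter Topology RealInnerProductSpace

/-!
Exponentiating the almost-geodesic inequality with constant `c` at `u = x α`, `v = x α'` gives
`1 - ⟪u, v⟫ ≤ 2 e^c (1 - ‖u‖)`. Letting `α' → ∞` weakly, the left side tends to
`1 - ⟪u, x̂⟫ ≥ 1 - ‖x̂‖ > 0`, while the right side tends to `0` as `‖x α‖ → 1`.
-/

lemma sqrt_one_sub_sq_norm_pos {E : Type*} [SeminormedAddCommGroup E] {u : E} (hu : ‖u‖ < 1) :
    0 < √(1 - ‖u‖ ^ 2) :=
  Real.sqrt_pos.2 (by nlinarith [norm_nonneg u])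

namespace dh

variable {H : Type*} [NormedAddCommGroup H] [InnerProductSpace ℝ H] {u v : H}

lemma one_sub_inner_pos (hu : ‖u‖ < 1) (hv : ‖v‖ < 1) : 0 < 1 - ⟪u, v⟫ := by
  have := real_inner_le_norm u v
  nlinarith [norm_nonneg u, norm_nonneg v]

lemma exp_eq (hu : ‖u‖ < 1) (hv : ‖v‖ < 1) :
    Real.exp (dh u v) =
      (1 - ⟪u, v⟫ + √((1 - ⟪u, v⟫) ^ 2 - (1 - ‖u‖ ^ 2) * (1 - ‖v‖ ^ 2))) /
        (√(1 - ‖u‖ ^ 2) * √(1 - ‖v‖ ^ 2)) := by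
  have := sqrt_one_sub_sq_norm_pos hu
  have := sqrt_one_sub_sq_norm_pos hv
  have := one_sub_inner_pos hu hv
  exact Real.exp_log (by positivity)

lemma exp_zero_left (hv : ‖v‖ < 1) : Real.exp (dh 0 v) = (1 + ‖v‖) / √(1 - ‖v‖ ^ 2) := by
  rw [exp_eq (u := 0) (by simp) hv]
  simp [Real.sqrt_sq (norm_nonneg v)]

lemma one_sub_inner_le (hu : ‖u‖ < 1) (hv : ‖v‖ < 1) :
    1 - ⟪u, v⟫ ≤ Real.exp (dh u v) * (√(1 - ‖u‖ ^ 2) * √(1 - ‖v‖ ^ 2)) := by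
  have := sqrt_one_sub_sq_norm_pos hu
  have := sqrt_one_sub_sq_norm_pos hv
  rw [exp_eq hu hv, div_mul_cancel₀ _ (by positivity)]
  linarith [Real.sqrt_nonneg ((1 - ⟪u, v⟫) ^ 2 - (1 - ‖u‖ ^ 2) * (1 - ‖v‖ ^ 2))]

lemma one_sub_inner_le_of_le_add (hu : ‖u‖ < 1) (hv : ‖v‖ < 1) {c : ℝ}
    (h : dh 0 u + dh u v - c ≤ dh 0 v) : 1 - ⟪u, v⟫ ≤ 2 * Real.exp c * (1 - ‖u‖) := by
  have hs := sqrt_one_sub_sq_norm_pos hu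
  have hs' := sqrt_one_sub_sq_norm_pos hv
  have hsq : √(1 - ‖u‖ ^ 2) ^ 2 = (1 - ‖u‖) * (1 + ‖u‖) := by
    rw [Real.sq_sqrt (by nlinarith [norm_nonneg u])]; ring
  have hexp : Real.exp (dh 0 u) * Real.exp (dh u v) ≤ Real.exp c * Real.exp (dh 0 v) := by
    rw [← Real.exp_add, ← Real.exp_add]
    exact Real.exp_le_exp.2 (by linarith)
  rw [exp_zero_left hu, exp_zero_left hv, div_mul_eq_mul_div, mul_div_assoc',
    div_le_div_iff₀ hs hs'] at hexp
  have hE : Real.exp (dh u v) * (√(1 - ‖u‖ ^ 2) * √(1 - ‖v‖ ^ 2)) ≤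
      Real.exp c * (1 + ‖v‖) * (1 - ‖u‖) := by
    refine le_of_mul_le_mul_left ?_ (by linarith [norm_nonneg u] : 0 < 1 + ‖u‖)
    calc (1 + ‖u‖) * (Real.exp (dh u v) * (√(1 - ‖u‖ ^ 2) * √(1 - ‖v‖ ^ 2)))
        = (1 + ‖u‖) * Real.exp (dh u v) * √(1 - ‖v‖ ^ 2) * √(1 - ‖u‖ ^ 2) := by ring
      _ ≤ Real.exp c * (1 + ‖v‖) * √(1 - ‖u‖ ^ 2) * √(1 - ‖u‖ ^ 2) :=
        mul_le_mul_of_nonneg_right hexp hs.le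
      _ = (1 + ‖u‖) * (Real.exp c * (1 + ‖v‖) * (1 - ‖u‖)) := by rw [mul_assoc, ← sq, hsq]; ring
  calc 1 - ⟪u, v⟫ ≤ Real.exp (dh u v) * (√(1 - ‖u‖ ^ 2) * √(1 - ‖v‖ ^ 2)) := one_sub_inner_le hu hv
    _ ≤ Real.exp c * (1 + ‖v‖) * (1 - ‖u‖) := hE
    _ ≤ Real.exp c * 2 * (1 - ‖u‖) := by gcongr; linarith
    _ = 2 * Real.exp c * (1 - ‖u‖) := by ring

end dh

theorem stmt_17_general {H : Type*} [NormedAddCommGroup H] [InnerProductSpace ℝ H]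
    {ι : Type*} [SemilatticeSup ι]
    (x : ι → H) (hx : ∀ α, ‖x α‖ < 1) (xhat : H) (hxhat : ‖xhat‖ < 1)
    (hweak : ∀ z : H, Tendsto (fun α => ⟪z, x α⟫) atTop (𝓝 ⟪z, xhat⟫))
    (hnorm : Tendsto (fun α => ‖x α‖) atTop (𝓝 1)) :
    ¬ (∀ ε > 0, ∃ A : ι, ∀ α α', A ≤ α → α ≤ α' →
        dh (0 : H) (x α') ≥ dh (0 : H) (x α) + dh (x α) (x α') - ε) := by
  intro h
  obtain ⟨A, hA⟩ := h 1 one_pos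
  have : Nonempty ι := ⟨A⟩
  have hbound : ∀ α ≥ A, 1 - ‖xhat‖ ≤ 2 * Real.exp 1 * (1 - ‖x α‖) := by
    intro α hα
    have hlim := tendsto_const_nhds (x := (1 : ℝ)) |>.sub (hweak (x α))
    have hle : 1 - ⟪x α, xhat⟫ ≤ 2 * Real.exp 1 * (1 - ‖x α‖) :=
      le_of_tendsto hlim <| eventually_atTop.2
        ⟨α, fun α' hα' => dh.one_sub_inner_le_of_le_add (hx α) (hx α') (hA α α' hα hα')⟩
    have hinner : ⟪x α, xhat⟫ ≤ ‖xhat‖ :=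
      (real_inner_le_norm _ _).trans (mul_le_of_le_one_left (norm_nonneg _) (hx α).le)
    linarith
  have hlim : Tendsto (fun α => 2 * Real.exp 1 * (1 - ‖x α‖)) atTop (𝓝 0) := by
    simpa using (hnorm.const_sub 1).const_mul (2 * Real.exp 1)
  linarith [ge_of_tendsto hlim (eventually_atTop.2 ⟨A, hbound⟩)]

theorem stmt_17 {H : Type*} [NormedAddCommGroup H] [InnerProductSpace ℝ H] [CompleteSpace H]
    {ι : Type*} [Nonempty ι] [SemilatticeSup ι]
    (x : ι → H) (hx : ∀ α, ‖x α‖ < 1) (xhat : H) (hxhat : ‖xhat‖ < 1)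
    (hweak : ∀ z : H, Tendsto (fun α => ⟪z, x α⟫) atTop (𝓝 ⟪z, xhat⟫))
    (hnorm : Tendsto (fun α => ‖x α‖) atTop (𝓝 1)) :
    ¬ (∀ ε > 0, ∃ A : ι, ∀ α α', A ≤ α → α ≤ α' →
        dh (0 : H) (x α') ≥ dh (0 : H) (x α) + dh (x α) (x α') - ε) :=
  stmt_17_general x hx xhat hxhat hweak hnorm
end
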